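/- arXiv:2305.02023 — 4 statements merged into one kernel-verified Lean document; each statement's English description precedes it below -/
import Mathlib

section
/- The faces of the ordered-subset complex K_X(r) are exactly the subsets C ⊆ X such that C contains at most one of a₁, a₂, C does not contain all of {b₁,b₂,b₃}, and C does not contain all of {c₁,c₂,c₃}. (Hence K_X(r) is the simplicial join of a 0-sphere {a₁,a₂} and two triangle boundaries, a simplicial 4-sphere.) -/
/-
The relation climbs strictly from the level {a₁, a₂} to {b₁, b₂, b₃} to {c₁, c₂, c₃} and never
descends, so a subset is ordered exactly when its intersection with each level is. On the first
level `r` is empty, so only subsets with at most one point are ordered; on each of the other two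
`r` is a directed 3-cycle, whose ordered subsets are exactly the proper ones.
-/

/-- The 8-element set `X = {a₁,a₂,b₁,b₂,b₃,c₁,c₂,c₃}`. -/
inductive X8 : Type
  | a1 | a2 | b1 | b2 | b3 | c1 | c2 | c3
  deriving DecidableEq

open X8

instance : Fintype X8 where
  elems := {a1, a2, b1, b2, b3, c1, c2, c3}
  complete := fun x => by cases x <;> simp

/-- The relation `r` on `X`: `r(aᵢ,bⱼ)`, `r(aᵢ,cⱼ)`, `r(bᵢ,cⱼ)` for all `i,j`;
`r(b₁,b₂), r(b₂,b₃), r(b₃,b₁)`; `r(c₁,c₂), r(c₂,c₃), r(c₃,c₁)`;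
and no other pairs are related. -/
def rX8 : X8 → X8 → Prop
  | a1, b1 | a1, b2 | a1, b3 | a1, c1 | a1, c2 | a1, c3 => True
  | a2, b1 | a2, b2 | a2, b3 | a2, c1 | a2, c2 | a2, c3 => True
  | b1, c1 | b1, c2 | b1, c3 | b2, c1 | b2, c2 | b2, c3 | b3, c1 | b3, c2 | b3, c3 => True
  | b1, b2 | b2, b3 | b3, b1 => True
  | c1, c2 | c2, c3 | c3, c1 => True
  | _, _ => False

instance : DecidableRel rX8 := fun x y => by
  unfold rX8; cases x <;> cases y <;> simp <;> infer_instance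

/-- A finite subset `C ⊆ X` is *ordered* (i.e. a face of the ordered-subset complex
`K_X(r)`) if the restriction of `r` to `C` is a strict linear order. -/
def IsOrdered {X : Type*} (r : X → X → Prop) (C : Finset X) : Prop :=
  (∀ x ∈ C, ∀ y ∈ C, x ≠ y → (r x y ∨ r y x)) ∧
  (∀ x ∈ C, ∀ y ∈ C, ¬ (r x y ∧ r y x)) ∧
  (∀ x ∈ C, ∀ y ∈ C, ∀ z ∈ C, r x y → r y z → r x z)

section IsOrdered

variable {X : Type*} {r : X → X → Prop}

theorem IsOrdered.mono {C D : Finset X} (hC : IsOrdered r C) (hDC : D ⊆ C) : IsOrdered r D :=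
  ⟨fun x hx y hy => hC.1 x (hDC hx) y (hDC hy),
   fun x hx y hy => hC.2.1 x (hDC hx) y (hDC hy),
   fun x hx y hy z hz => hC.2.2 x (hDC hx) y (hDC hy) z (hDC hz)⟩

theorem isOrdered_singleton [Std.Irrefl r] (x : X) : IsOrdered r {x} := by
  simp [IsOrdered, irrefl x]

theorem isOrdered_pair [DecidableEq X] [Std.Irrefl r] {x y : X} (hxy : r x y) (hyx : ¬ r y x) :
    IsOrdered r {x, y} := by
  simp [IsOrdered, irrefl x, irrefl y, hxy, hyx]

theorem isOrdered_iff_of_subset_incomparable_pair [DecidableEq X] [Std.Irrefl r] {x y : X}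
    (hne : x ≠ y) (hxy : ¬ r x y) (hyx : ¬ r y x) {D : Finset X} (hD : D ⊆ {x, y}) :
    IsOrdered r D ↔ ¬ (x ∈ D ∧ y ∈ D) := by
  refine ⟨fun hD ⟨hx, hy⟩ => (hD.1 x hx y hy hne).elim hxy hyx, fun hxy => ?_⟩
  have : D ⊆ {x} ∨ D ⊆ {y} := by
    simp only [Finset.subset_iff, Finset.mem_insert, Finset.mem_singleton] at hD ⊢
    grind
  rcases this with h | h
  exacts [(isOrdered_singleton x).mono h, (isOrdered_singleton y).mono h]

theorem not_isOrdered_of_cycle {C : Finset X} {x y z : X} (hx : x ∈ C) (hy : y ∈ C) (hz : z ∈ C)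
    (hxy : r x y) (hyz : r y z) (hzx : r z x) : ¬ IsOrdered r C :=
  fun hC => hC.2.1 x hx z hz ⟨hC.2.2 x hx y hy z hz hxy hyz, hzx⟩

theorem isOrdered_iff_of_subset_cycle [DecidableEq X] [Std.Irrefl r] {x y z : X}
    (hxy : r x y) (hyz : r y z) (hzx : r z x) (hyx : ¬ r y x) (hzy : ¬ r z y) (hxz : ¬ r x z)
    {D : Finset X} (hD : D ⊆ {x, y, z}) :
    IsOrdered r D ↔ ¬ {x, y, z} ⊆ D := by
  refine ⟨fun hDo hsub => ?_, fun hsub => ?_⟩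
  · simp only [Finset.insert_subset_iff, Finset.singleton_subset_iff] at hsub
    exact not_isOrdered_of_cycle hsub.1 hsub.2.1 hsub.2.2 hxy hyz hzx hDo
  · have : D ⊆ {y, z} ∨ D ⊆ {z, x} ∨ D ⊆ {x, y} := by
      simp only [Finset.subset_iff, Finset.mem_insert, Finset.mem_singleton] at hD hsub ⊢
      grind
    rcases this with h | h | h
    exacts [(isOrdered_pair hyz hzy).mono h, (isOrdered_pair hzx hxz).mono h,
      (isOrdered_pair hxy hyx).mono h]

/-- An ordinal sum of strict linear orders is a strict linear order. -/
theorem isOrdered_iff_forall_fiber {ι : Type*} [LinearOrder ι] (f : X → ι)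
    (hlt : ∀ x y, f x < f y → r x y) (hle : ∀ x y, r x y → f x ≤ f y) (C : Finset X) :
    IsOrdered r C ↔ ∀ i, IsOrdered r (C.filter fun x => f x = i) := by
  refine ⟨fun hC i => hC.mono (Finset.filter_subset _ _), fun h => ⟨?_, ?_, ?_⟩⟩
  · intro x hx y hy hne
    rcases lt_trichotomy (f x) (f y) with hxy | hxy | hxy
    · exact Or.inl (hlt x y hxy)
    · exact (h (f x)).1 x (by simp [hx]) y (by simp [hy, hxy]) hne
    · exact Or.inr (hlt y x hxy)
  · rintro x hx y hy ⟨hxy, hyx⟩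
    have hf : f y = f x := le_antisymm (hle y x hyx) (hle x y hxy)
    exact (h (f x)).2.1 x (by simp [hx]) y (by simp [hy, hf]) ⟨hxy, hyx⟩
  · intro x hx y hy z hz hxy hyz
    rcases (hle x y hxy).trans (hle y z hyz) |>.lt_or_eq with hxz | hxz
    · exact hlt x z hxz
    · have hfy : f y = f x := le_antisymm (hxz ▸ hle y z hyz) (hle x y hxy)
      exact (h (f x)).2.2 x (by simp [hx]) y (by simp [hy, hfy]) z (by simp [hz, hxz]) hxy hyz

end IsOrdered

namespace X8

def rank : X8 → Fin 3
  | a1 | a2 => 0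
  | b1 | b2 | b3 => 1
  | c1 | c2 | c3 => 2

instance : Std.Irrefl rX8 := ⟨by decide⟩

theorem rX8_of_rank_lt : ∀ x y, rank x < rank y → rX8 x y := by decide

theorem rank_le_of_rX8 : ∀ x y, rX8 x y → rank x ≤ rank y := by decide

end X8

/-- The faces of `K_X(r)` are exactly the subsets `C ⊆ X` containing
at most one of `a₁, a₂`, not all of `{b₁,b₂,b₃}`, and not all of `{c₁,c₂,c₃}`.
Hence `K_X(r)` is the join of a 0-sphere and two triangle boundaries: an `S⁴`. -/
theorem x8_faces_characterization :
    ∀ C : Finset X8,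
      IsOrdered rX8 C ↔
        ¬ (a1 ∈ C ∧ a2 ∈ C) ∧ ¬ ({b1, b2, b3} : Finset X8) ⊆ C ∧
          ¬ ({c1, c2, c3} : Finset X8) ⊆ C := by
  intro C
  have hA : C.filter (rank · = 0) ⊆ {a1, a2} :=
    (Finset.filter_subset_filter _ C.subset_univ).trans (by decide)
  have hB : C.filter (rank · = 1) ⊆ {b1, b2, b3} :=
    (Finset.filter_subset_filter _ C.subset_univ).trans (by decide)
  have hC : C.filter (rank · = 2) ⊆ {c1, c2, c3} :=
    (Finset.filter_subset_filter _ C.subset_univ).trans (by decide)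
  rw [isOrdered_iff_forall_fiber rank rX8_of_rank_lt rank_le_of_rX8]
  simp only [Fin.forall_fin_succ, Fin.succ_zero_eq_one, Fin.succ_one_eq_two]
  rw [isOrdered_iff_of_subset_incomparable_pair (by decide) (by decide) (by decide) hA,
    isOrdered_iff_of_subset_cycle (by decide) (by decide) (by decide) (by decide) (by decide)
      (by decide) hB,
    isOrdered_iff_of_subset_cycle (by decide) (by decide) (by decide) (by decide) (by decide)
      (by decide) hC]
  simp only [Finset.insert_subset_iff, Finset.singleton_subset_iff, Finset.mem_filter]
  simp [rank]
end

section
/- In Penney's game with patterns of length 3, the pattern 011 beats the pattern 110: μ{ω : T_{011}(ω) < T_{110}(ω)} > 1/2. -/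
/-!
If the first two flips are `11`, then `110` wins: the first `0` after them completes `110`,
while no `011` can occur before it. Otherwise the first occurrence of `11`, at some position
`n ≥ 1`, is preceded by a `0`, so `011` appears at `n - 1`, before any `110` can appear. Hence
`011` wins with probability `3/4`. To stay within finitely many coordinates we only count the
sequences whose first `11` sits at a position `1 ≤ n ≤ 6`: among the `2^8` words of length `8`
there are `137` of them, and `137 / 256 > 1 / 2`.
-/

open MeasureTheory

/-- The first time the length-3 pattern `p` appears in the bit sequence `ω`
(as `ω n, ω (n+1), ω (n+2)`), or `∞` if it never appears. -/
noncomputable def hitTime (p : Bool × Bool × Bool) (ω : ℕ → Bool) : ℕ∞ :=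
  sInf ((fun n : ℕ => (n : ℕ∞)) '' {n : ℕ | (ω n, ω (n + 1), ω (n + 2)) = p})

/-- `μ` is the fair-coin measure on `ℕ → Bool`, i.e. the product over `ℕ` of the
uniform probability measure on `Bool`: it is characterized by giving each cylinder
set prescribing finitely many coordinates its uniform probability `(1/2)^#coords`. -/
def IsFairCoinMeasure (μ : Measure (ℕ → Bool)) : Prop :=
  ∀ (s : Finset ℕ) (v : ℕ → Bool),
    μ {ω : ℕ → Bool | ∀ i ∈ s, ω i = v i} = (1 / 2 : ENNReal) ^ s.card

open Finset

def prefixWord (k : ℕ) (ω : ℕ → Bool) : Fin k → Bool := fun i => ω i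

def wordToSeq {k : ℕ} (x : Fin k → Bool) : ℕ → Bool :=
  fun i => if h : i < k then x ⟨i, h⟩ else false

lemma measurable_prefixWord (k : ℕ) : Measurable (prefixWord k) :=
  measurable_pi_lambda _ fun _ => measurable_pi_apply _

lemma prefixWord_eq_iff {k : ℕ} {ω : ℕ → Bool} {x : Fin k → Bool} :
    prefixWord k ω = x ↔ ∀ i < k, ω i = wordToSeq x i := by
  simp only [funext_iff, Fin.forall_iff, prefixWord, wordToSeq]
  exact forall₂_congr fun i hi => by rw [dif_pos hi]

namespace IsFairCoinMeasure

variable {μ : Measure (ℕ → Bool)} {k : ℕ}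

lemma measure_prefixWord_preimage_singleton (hμ : IsFairCoinMeasure μ) (x : Fin k → Bool) :
    μ (prefixWord k ⁻¹' {x}) = (1 / 2) ^ k := by
  simpa [Set.preimage, prefixWord_eq_iff] using hμ (range k) (wordToSeq x)

lemma measure_prefixWord_preimage (hμ : IsFairCoinMeasure μ) (S : Finset (Fin k → Bool)) :
    μ (prefixWord k ⁻¹' S) = #S * (1 / 2) ^ k := by
  rw [← sum_measure_preimage_singleton S fun x _ =>
    measurable_prefixWord k (measurableSet_singleton x)]
  simp [hμ.measure_prefixWord_preimage_singleton]

lemma measure_setOf_of_dependsOn (hμ : IsFairCoinMeasure μ) {P : (ℕ → Bool) → Prop}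
    [DecidablePred P] (hP : DependsOn P (Set.Iio k)) :
    μ {ω | P ω} = #{x : Fin k → Bool | P (wordToSeq x)} * (1 / 2) ^ k := by
  rw [← hμ.measure_prefixWord_preimage]
  congr 1
  ext ω
  simp only [coe_filter, mem_univ, true_and, Set.mem_preimage]
  exact (hP fun i hi => prefixWord_eq_iff.mp rfl i hi).to_iff

end IsFairCoinMeasure

section hitTime

variable {p : Bool × Bool × Bool} {ω : ℕ → Bool} {n : ℕ}

lemma hitTime_le (h : (ω n, ω (n + 1), ω (n + 2)) = p) : hitTime p ω ≤ n :=
  sInf_le ⟨n, h, rfl⟩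

lemma le_hitTime (h : ∀ m < n, (ω m, ω (m + 1), ω (m + 2)) ≠ p) : n ≤ hitTime p ω := by
  refine le_sInf ?_
  rintro _ ⟨m, hm, rfl⟩
  by_contra hlt
  exact h m (by simpa using hlt) hm

end hitTime

def FirstDoubleOneAt (ω : ℕ → Bool) (n : ℕ) : Prop :=
  ω n = true ∧ ω (n + 1) = true ∧ ∀ m < n, ¬(ω m = true ∧ ω (m + 1) = true)

instance (ω : ℕ → Bool) (n : ℕ) : Decidable (FirstDoubleOneAt ω n) := by
  unfold FirstDoubleOneAt; infer_instance

lemma dependsOn_firstDoubleOneAt (n : ℕ) :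
    DependsOn (FirstDoubleOneAt · n) (Set.Iio (n + 2)) := by
  intro ω ω' h
  have h' : ∀ i ≤ n + 1, ω i = ω' i := fun i hi => h i (Set.mem_Iio.mpr (by omega))
  have hpair : ∀ m < n, (ω m = true ∧ ω (m + 1) = true) ↔ (ω' m = true ∧ ω' (m + 1) = true) :=
    fun m hm => by rw [h' m (by omega), h' (m + 1) (by omega)]
  simp only [FirstDoubleOneAt, h' n (by omega), h' (n + 1) le_rfl]
  exact propext <| and_congr_right fun _ => and_congr_right fun _ =>
    forall₂_congr fun m hm => not_congr (hpair m hm)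

lemma hitTime_lt_of_firstDoubleOneAt {ω : ℕ → Bool} {n : ℕ} (hn : 0 < n)
    (h : FirstDoubleOneAt ω n) :
    hitTime (false, true, true) ω < hitTime (true, true, false) ω := by
  obtain ⟨hωn, hωn1, hfirst⟩ := h
  have hprev : ω (n - 1) = false := by
    by_contra hne
    rw [Bool.not_eq_false] at hne
    exact hfirst (n - 1) (by omega) ⟨hne, by rwa [Nat.sub_add_cancel hn]⟩
  calc hitTime (false, true, true) ω ≤ (n - 1 : ℕ) := hitTime_le (by
        rw [show n - 1 + 1 = n by omega, show n - 1 + 2 = n + 1 by omega, hprev, hωn, hωn1])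
    _ < n := by exact_mod_cast Nat.sub_lt hn one_pos
    _ ≤ hitTime (true, true, false) ω := le_hitTime fun m hm heq => by
        simp only [Prod.mk.injEq] at heq
        exact hfirst m hm ⟨heq.1, heq.2.1⟩

/-- In Penney's game with patterns of length 3, the pattern `011`
beats the pattern `110`: `μ {ω | T_011 ω < T_110 ω} > 1/2`. -/
theorem penney_011_beats_110 (μ : Measure (ℕ → Bool)) (hμ : IsFairCoinMeasure μ) :
    μ {ω : ℕ → Bool | hitTime (false, true, true) ω < hitTime (true, true, false) ω}
      > 1 / 2 := by
  have hdep : DependsOn (fun ω => ∃ n ∈ (Icc 1 6 : Finset ℕ), FirstDoubleOneAt ω n)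
      (Set.Iio 8) := by
    intro ω ω' h
    refine propext (exists_congr fun n => and_congr_right fun hn => ?_)
    refine (dependsOn_firstDoubleOneAt n fun i hi => h i ?_).to_iff
    simp only [Set.mem_Iio, mem_Icc] at hi hn ⊢
    omega
  have hcard : #{x : Fin 8 → Bool | ∃ n ∈ (Icc 1 6 : Finset ℕ),
      FirstDoubleOneAt (wordToSeq x) n} = 137 := by
    set_option maxRecDepth 10000 in decide
  calc (1 / 2 : ENNReal) < 137 * (1 / 2) ^ 8 := by
        rw [← ENNReal.toReal_lt_toReal (by simp) (by finiteness)]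
        norm_num
    _ = μ {ω | ∃ n ∈ (Icc 1 6 : Finset ℕ), FirstDoubleOneAt ω n} := by
        rw [hμ.measure_setOf_of_dependsOn hdep, hcard]
        norm_num
    _ ≤ _ := measure_mono fun ω ⟨n, hn, h⟩ =>
        hitTime_lt_of_firstDoubleOneAt (by simp only [mem_Icc] at hn; omega) h
end

section
/- In Penney's game with patterns of length 3, the pattern 110 beats the pattern 100: μ{ω : T_{110}(ω) < T_{100}(ω)} > 1/2. -/
open MeasureTheory

/-!
Once `11` has occurred at some position `n` with no `100` completed before, `110` wins: the run
of `1`s starting at `n` ends (almost surely) with a `0` at some `m`, giving `110` at `m - 2`, while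
an earlier `100` would need a `0` inside the run. The prefixes `11, 011, 0011, 1011, 00011, 01011`
force this situation; they are pairwise incompatible with total probability `9 / 16 > 1 / 2`, and
the sequences without a `0` after position `5` form a null set.
-/

namespace Penney

lemma hitTime_le_of_eq {p : Bool × Bool × Bool} {ω : ℕ → Bool} {N : ℕ}
    (h : (ω N, ω (N + 1), ω (N + 2)) = p) : hitTime p ω ≤ N :=
  sInf_le ⟨N, h, rfl⟩

lemma lt_hitTime_of_forall_ne {p : Bool × Bool × Bool} {ω : ℕ → Bool} {N : ℕ}
    (h : ∀ k ≤ N, (ω k, ω (k + 1), ω (k + 2)) ≠ p) : (N : ℕ∞) < hitTime p ω := by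
  refine (ENat.add_one_le_iff (ENat.natCast_ne_top N)).mp (le_sInf ?_)
  rintro _ ⟨k, hk, rfl⟩
  have : N < k := by
    by_contra! hkN
    exact h k hkN hk
  exact ENat.natCast_le_natCast.mpr this

lemma exists_run_of_eq_true {ω : ℕ → Bool} {n : ℕ} (h₀ : ω n = true) (h₁ : ω (n + 1) = true)
    (hf : ∃ m, n + 2 ≤ m ∧ ω m = false) :
    ∃ m, n + 2 ≤ m ∧ (∀ j, n ≤ j → j < m → ω j = true) ∧ ω m = false := by
  classical
  refine ⟨Nat.find hf, (Nat.find_spec hf).1, fun j hnj hjm => ?_, (Nat.find_spec hf).2⟩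
  rcases (by omega : j = n ∨ j = n + 1 ∨ n + 2 ≤ j) with rfl | rfl | hj
  · exact h₀
  · exact h₁
  · simpa [hj] using Nat.find_min hf hjm

lemma hitTime_110_lt_hitTime_100_of_run {ω : ℕ → Bool} {n m : ℕ} (hnm : n + 2 ≤ m)
    (hrun : ∀ j, n ≤ j → j < m → ω j = true) (hm : ω m = false)
    (hpre : ∀ k, k + 3 ≤ n → (ω k, ω (k + 1), ω (k + 2)) ≠ (true, false, false)) :
    hitTime (true, true, false) ω < hitTime (true, false, false) ω := by
  have hfalse (j : ℕ) (hj : j < m) (hf : ω j = false) : j < n := by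
    by_contra! hjn
    simp [hrun j hjn hj] at hf
  calc hitTime (true, true, false) ω ≤ (m - 2 : ℕ) := by
        apply hitTime_le_of_eq
        rw [show m - 2 + 2 = m by omega, hrun (m - 2) (by omega) (by omega),
          hrun (m - 2 + 1) (by omega) (by omega), hm]
    _ < hitTime (true, false, false) ω := lt_hitTime_of_forall_ne fun k hk hocc => by
        simp only [Prod.mk.injEq] at hocc
        have := hfalse (k + 1) (by omega) hocc.2.1
        have := hfalse (k + 2) (by omega) hocc.2.2
        exact hpre k (by omega) (by rw [hocc.1, hocc.2.1, hocc.2.2])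

def prefixCylinder (l : List Bool) : Set (ℕ → Bool) :=
  {ω | ∀ i ∈ Finset.range l.length, ω i = l.getD i false}

lemma measurableSet_prefixCylinder (l : List Bool) : MeasurableSet (prefixCylinder l) := by
  simp only [prefixCylinder, Set.ofPred_forall]
  exact .biInter (Finset.range l.length).countable_toSet fun i _ =>
    measurableSet_eq_fun (measurable_pi_apply i) measurable_const

lemma pairwiseDisjoint_prefixCylinder {ι : Type*} {S : Finset ι} {f : ι → List Bool}
    (h : ∀ a ∈ S, ∀ b ∈ S, a ≠ b →
      ∃ i < (f a).length, i < (f b).length ∧ (f a).getD i false ≠ (f b).getD i false) :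
    (S : Set ι).PairwiseDisjoint fun a => prefixCylinder (f a) := by
  intro a ha b hb hne
  obtain ⟨i, hi₁, hi₂, hdiff⟩ := h a ha b hb hne
  exact Set.disjoint_left.mpr fun ω hω₁ hω₂ =>
    hdiff ((hω₁ i (Finset.mem_range.mpr hi₁)).symm.trans (hω₂ i (Finset.mem_range.mpr hi₂)))

lemma hitTime_110_lt_hitTime_100_of_mem_prefixCylinder {w : List Bool} {ω : ℕ → Bool}
    (hw : ∀ k < w.length - 2,
      (w.getD k false, w.getD (k + 1) false, w.getD (k + 2) false) ≠ (true, false, false))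
    (hω : ω ∈ prefixCylinder (w ++ [true, true])) (hf : ∃ m, w.length + 2 ≤ m ∧ ω m = false) :
    hitTime (true, true, false) ω < hitTime (true, false, false) ω := by
  have hωw (i : ℕ) (hi : i < w.length) : ω i = w.getD i false := by
    rw [hω i (Finset.mem_range.mpr (by rw [List.length_append]; omega)),
      List.getD_append _ _ _ _ hi]
  obtain ⟨m, hnm, hrun, hm⟩ := exists_run_of_eq_true
    (by simpa using hω w.length (by simp)) (by simpa using hω (w.length + 1) (by simp)) hf
  refine hitTime_110_lt_hitTime_100_of_run hnm hrun hm fun k hk => ?_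
  rw [hωw k (by omega), hωw (k + 1) (by omega), hωw (k + 2) (by omega)]
  exact hw k (by omega)

end Penney

namespace IsFairCoinMeasure

open Penney

lemma measure_prefixCylinder {μ : Measure (ℕ → Bool)} (hμ : IsFairCoinMeasure μ)
    (l : List Bool) : μ (prefixCylinder l) = (1 / 2) ^ l.length := by
  rw [prefixCylinder, hμ, Finset.card_range]

lemma measure_eventually_eq_eq_zero {μ : Measure (ℕ → Bool)} (hμ : IsFairCoinMeasure μ)
    (N : ℕ) (v : ℕ → Bool) : μ {ω | ∀ m, N ≤ m → ω m = v m} = 0 := by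
  have hle (k : ℕ) : μ {ω | ∀ m, N ≤ m → ω m = v m} ≤ (1 / 2) ^ k := by
    calc μ {ω | ∀ m, N ≤ m → ω m = v m}
        ≤ μ {ω | ∀ i ∈ Finset.Ico N (N + k), ω i = v i} :=
          measure_mono fun ω hω i hi => hω i (Finset.mem_Ico.mp hi).1
      _ = (1 / 2) ^ k := by rw [hμ, Nat.card_Ico, Nat.add_sub_cancel_left]
  exact le_antisymm
    (ge_of_tendsto' (ENNReal.tendsto_pow_atTop_nhds_zero_of_lt_one (by norm_num)) hle) zero_le

end IsFairCoinMeasure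

namespace Penney

/-- The words `w` of length at most `3` such that `w ++ [true, true]` contains no `100` and ends
with its first `11`. -/
def winningWords : Finset (List Bool) :=
  {[], [false], [false, false], [true, false], [false, false, false], [false, true, false]}

lemma iUnion_winningWords_subset :
    ⋃ w ∈ winningWords, prefixCylinder (w ++ [true, true]) ⊆
      {ω | hitTime (true, true, false) ω < hitTime (true, false, false) ω} ∪
        {ω | ∀ m, 5 ≤ m → ω m = true} := by
  have hW : ∀ w ∈ winningWords, w.length ≤ 3 ∧ ∀ k < w.length - 2,
      (w.getD k false, w.getD (k + 1) false, w.getD (k + 2) false) ≠ (true, false, false) := by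
    decide
  intro ω hω
  simp only [Set.mem_iUnion] at hω
  obtain ⟨w, hwW, hωw⟩ := hω
  by_cases hB : ∀ m, 5 ≤ m → ω m = true
  · exact .inr hB
  simp only [not_forall, Bool.not_eq_true] at hB
  obtain ⟨m, hm, hf⟩ := hB
  have hlen := (hW w hwW).1
  exact .inl (hitTime_110_lt_hitTime_100_of_mem_prefixCylinder (hW w hwW).2 hωw ⟨m, by omega, hf⟩)

lemma measure_iUnion_winningWords {μ : Measure (ℕ → Bool)} (hμ : IsFairCoinMeasure μ) :
    μ (⋃ w ∈ winningWords, prefixCylinder (w ++ [true, true])) =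
      (1 / 2) ^ 2 + (1 / 2) ^ 3 + (1 / 2) ^ 4 + (1 / 2) ^ 4 + (1 / 2) ^ 5 + (1 / 2) ^ 5 := by
  rw [measure_biUnion_finset (pairwiseDisjoint_prefixCylinder (by decide))
    fun _ _ => measurableSet_prefixCylinder _]
  simp [winningWords, hμ.measure_prefixCylinder, add_assoc]

end Penney

open Penney in
/-- In Penney's game with patterns of length 3, the pattern `110`
beats the pattern `100`: `μ {ω | T_110 ω < T_100 ω} > 1/2`. -/
theorem penney_110_beats_100 (μ : Measure (ℕ → Bool)) (hμ : IsFairCoinMeasure μ) :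
    μ {ω : ℕ → Bool | hitTime (true, true, false) ω < hitTime (true, false, false) ω}
      > 1 / 2 := by
  set E := {ω : ℕ → Bool | hitTime (true, true, false) ω < hitTime (true, false, false) ω}
  calc (1 / 2 : ENNReal)
      < (1 / 2) ^ 2 + (1 / 2) ^ 3 + (1 / 2) ^ 4 + (1 / 2) ^ 4 + (1 / 2) ^ 5 + (1 / 2) ^ 5 := by
        rw [← ENNReal.toReal_lt_toReal (by simp) (by simp)]
        simp [ENNReal.toReal_add, ENNReal.toReal_pow]
        norm_num
    _ = μ (⋃ w ∈ winningWords, prefixCylinder (w ++ [true, true])) :=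
        (measure_iUnion_winningWords hμ).symm
    _ ≤ μ (E ∪ {ω | ∀ m, 5 ≤ m → ω m = true}) := measure_mono iUnion_winningWords_subset
    _ ≤ μ E + μ {ω | ∀ m, 5 ≤ m → ω m = true} := measure_union_le _ _
    _ = μ E := by rw [hμ.measure_eventually_eq_eq_zero 5 fun _ => true, add_zero]
end

section
/- In Penney's game with patterns of length 3, the pattern 001 beats the pattern 011: μ{ω : T_{001}(ω) < T_{011}(ω)} > 1/2. (Together with the relations 011 beats 110, 110 beats 100, 100 beats 001, this shows the beating relation on length-3 patterns is not transitive.) -/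
open MeasureTheory

/-!
`001` in fact wins with probability `2/3`, but the first seven tosses already decide enough:
in `69` of the `128` words of length seven, `001` starts at some position `n ≤ 4` while `011`
starts at no position `m ≤ n`. Each such word is a cylinder of measure `2⁻⁷` on which `001`
comes first, and `69 / 128 > 1 / 2`.
-/

def OccursAt (p : Bool × Bool × Bool) (ω : ℕ → Bool) (n : ℕ) : Prop :=
  (ω n, ω (n + 1), ω (n + 2)) = p

instance (p : Bool × Bool × Bool) (ω : ℕ → Bool) (n : ℕ) : Decidable (OccursAt p ω n) :=
  inferInstanceAs (Decidable (_ = _))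

theorem hitTime_le_of_occursAt {p : Bool × Bool × Bool} {ω : ℕ → Bool} {n : ℕ}
    (h : OccursAt p ω n) : hitTime p ω ≤ n :=
  sInf_le ⟨n, h, rfl⟩

theorem le_hitTime_of_forall_not_occursAt {q : Bool × Bool × Bool} {ω : ℕ → Bool} {n : ℕ}
    (h : ∀ m < n, ¬OccursAt q ω m) : (n : ℕ∞) ≤ hitTime q ω := by
  refine le_sInf ?_
  rintro _ ⟨m, hm, rfl⟩
  exact Nat.cast_le.mpr (not_lt.mp fun hmn => h m hmn hm)

def WinsBefore (p q : Bool × Bool × Bool) (N : ℕ) (ω : ℕ → Bool) : Prop :=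
  ∃ n < N, OccursAt p ω n ∧ ∀ m ≤ n, ¬OccursAt q ω m

instance (p q : Bool × Bool × Bool) (N : ℕ) (ω : ℕ → Bool) :
    Decidable (WinsBefore p q N ω) :=
  inferInstanceAs (Decidable (∃ n < N, _))

theorem WinsBefore.hitTime_lt {p q : Bool × Bool × Bool} {N : ℕ} {ω : ℕ → Bool}
    (h : WinsBefore p q N ω) : hitTime p ω < hitTime q ω := by
  obtain ⟨n, -, hp, hq⟩ := h
  calc hitTime p ω ≤ n := hitTime_le_of_occursAt hp
    _ < (n + 1 : ℕ) := by exact_mod_cast n.lt_succ_self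
    _ ≤ hitTime q ω := le_hitTime_of_forall_not_occursAt fun m hm => hq m (by omega)

theorem winsBefore_congr {p q : Bool × Bool × Bool} {N : ℕ} {ω ω' : ℕ → Bool}
    (h : ∀ i < N + 2, ω i = ω' i) : WinsBefore p q N ω ↔ WinsBefore p q N ω' := by
  have hocc : ∀ r n, n < N → (OccursAt r ω n ↔ OccursAt r ω' n) := fun r n hn => by
    simp only [OccursAt, h n (by omega), h (n + 1) (by omega), h (n + 2) (by omega)]
  unfold WinsBefore
  refine exists_congr fun n => and_congr_right fun hn => ?_
  rw [hocc p n hn]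
  exact and_congr_right' <| forall₂_congr fun m hm => not_congr (hocc q m (by omega))

def bitCylinder (k x : ℕ) : Set (ℕ → Bool) :=
  {ω | ∀ i ∈ Finset.range k, ω i = x.testBit i}

theorem measurableSet_bitCylinder (k x : ℕ) : MeasurableSet (bitCylinder k x) := by
  have : bitCylinder k x = ⋂ i ∈ Finset.range k, (fun ω : ℕ → Bool => ω i) ⁻¹' {x.testBit i} := by
    ext ω; simp [bitCylinder]
  rw [this]
  exact .biInter (Finset.range k).countable_toSet
    fun i _ => measurable_pi_apply i (measurableSet_singleton _)

theorem pairwiseDisjoint_bitCylinder {k : ℕ} {S : Finset ℕ} (hS : ∀ x ∈ S, x < 2 ^ k) :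
    (S : Set ℕ).PairwiseDisjoint (bitCylinder k) := by
  intro x hx y hy hxy
  refine Set.disjoint_left.mpr fun ω hωx hωy => hxy (Nat.eq_of_testBit_eq fun i => ?_)
  by_cases hi : i < k
  · rw [← hωx i (Finset.mem_range.mpr hi), ← hωy i (Finset.mem_range.mpr hi)]
  · have hki : 2 ^ k ≤ 2 ^ i := Nat.pow_le_pow_right two_pos (not_lt.mp hi)
    rw [Nat.testBit_lt_two_pow ((hS x hx).trans_le hki),
      Nat.testBit_lt_two_pow ((hS y hy).trans_le hki)]

theorem IsFairCoinMeasure.measure_biUnion_bitCylinder {μ : Measure (ℕ → Bool)}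
    (hμ : IsFairCoinMeasure μ) {k : ℕ} {S : Finset ℕ} (hS : ∀ x ∈ S, x < 2 ^ k) :
    μ (⋃ x ∈ S, bitCylinder k x) = S.card * (1 / 2) ^ k := by
  rw [measure_biUnion_finset (pairwiseDisjoint_bitCylinder hS)
    fun x _ => measurableSet_bitCylinder k x,
    Finset.sum_congr rfl fun x _ => hμ (Finset.range k) x.testBit, Finset.sum_const,
    Finset.card_range, nsmul_eq_mul]

theorem bitCylinder_subset_winsBefore {p q : Bool × Bool × Bool} {N x : ℕ}
    (hx : WinsBefore p q N x.testBit) :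
    bitCylinder (N + 2) x ⊆ {ω | WinsBefore p q N ω} := fun _ hω =>
  (winsBefore_congr fun i hi => hω i (Finset.mem_range.mpr hi)).mpr hx

theorem card_winsBefore_001_011 :
    ((Finset.range (2 ^ 7)).filter
      fun x => WinsBefore (false, false, true) (false, true, true) 5 x.testBit).card = 69 := by
  decide

/-- In Penney's game with patterns of length 3, the pattern `001`
beats the pattern `011`: `μ {ω | T_001 ω < T_011 ω} > 1/2`.  (Together with
`011 > 110 > 100 > 001` this shows the beating relation is not transitive.) -/
theorem penney_001_beats_011 (μ : Measure (ℕ → Bool)) (hμ : IsFairCoinMeasure μ) :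
    μ {ω : ℕ → Bool | hitTime (false, false, true) ω < hitTime (false, true, true) ω}
      > 1 / 2 := by
  set S := (Finset.range (2 ^ 7)).filter
    fun x => WinsBefore (false, false, true) (false, true, true) 5 x.testBit
  have hS : ∀ x ∈ S, x < 2 ^ 7 := fun x hx => Finset.mem_range.mp (Finset.mem_filter.mp hx).1
  calc (1 / 2 : ENNReal) < 69 * (1 / 2) ^ 7 := by
        rw [← ENNReal.toReal_lt_toReal (by norm_num) (by simp [ENNReal.mul_eq_top])]
        norm_num
    _ = μ (⋃ x ∈ S, bitCylinder 7 x) := by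
      rw [hμ.measure_biUnion_bitCylinder hS, card_winsBefore_001_011, Nat.cast_ofNat]
    _ ≤ μ {ω | WinsBefore (false, false, true) (false, true, true) 5 ω} :=
      measure_mono <| Set.iUnion₂_subset fun x hx =>
        bitCylinder_subset_winsBefore (Finset.mem_filter.mp hx).2
    _ ≤ _ := measure_mono fun _ => WinsBefore.hitTime_lt
end
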